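/- In the ring ℝ[[x,y]] of formal power series in two variables over ℝ, let I be the ideal generated by 5x⁴+2xy² and 2x²y+5y⁴. Then the quotient ring A = ℝ[[x,y]]/I has dimension 11 as a real vector space. -/

import Mathlib

/-!
Write `g₁ = 5x⁴ + 2xy²`, `g₂ = 2x²y + 5y⁴`. Multiplying by units of `ℝ[[x,y]]` such as
`4 - 25xy` puts `xy³`, `x³y`, `x⁶`, `y⁶` and `x⁵ - y⁵` into `I`. Since `x⁶, y⁶ ∈ I`, every power
series is congruent to a polynomial, and the relations `2xy² ≡ -5x⁴`, `2x²y ≡ -5y⁴`, `x⁵ ≡ y⁵`,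
`xy³ ≡ x³y ≡ 0` show that the span of `1, x, x², x³, x⁴, y, y², y³, y⁴, y⁵, xy` is stable under
multiplication by `x` and `y`, hence is all of `A`. These eleven monomials are independent:
comparing the coefficients of degree at most five in `∑ cᵢ mᵢ = p g₁ + q g₂` forces every `cᵢ`
to vanish.
-/

/-- The variable `x` in `ℝ[[x,y]]`. -/
noncomputable def psX : MvPowerSeries (Fin 2) ℝ := MvPowerSeries.X 0

/-- The variable `y` in `ℝ[[x,y]]`. -/
noncomputable def psY : MvPowerSeries (Fin 2) ℝ := MvPowerSeries.X 1

/-- The ideal `I = (5x⁴+2xy², 2x²y+5y⁴)` of `ℝ[[x,y]]` generated by the two partial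
derivatives of `f = x⁵+x²y²+y⁵`. -/
noncomputable def idealI : Ideal (MvPowerSeries (Fin 2) ℝ) :=
  Ideal.span {5 * psX ^ 4 + 2 * psX * psY ^ 2, 2 * psX ^ 2 * psY + 5 * psY ^ 4}

namespace MvPowerSeries

variable {σ R : Type*}

theorem exists_coeff_sub_X_pow_mul [Ring R] (φ : MvPowerSeries σ R) (s : σ) (n : ℕ) :
    ∃ ψ, ∀ m, coeff m (φ - X s ^ n * ψ) = if m s < n then coeff m φ else 0 := by
  classical
  obtain ⟨ψ, hψ⟩ : X s ^ n ∣ fun m => if m s < n then 0 else coeff m φ :=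
    X_pow_dvd_iff.2 fun m hm => if_pos hm
  refine ⟨ψ, fun m => ?_⟩
  rw [map_sub, ← hψ]
  change coeff m φ - (if m s < n then 0 else coeff m φ) = _
  split_ifs <;> simp

theorem sub_trunc'_mem_span_X_pow [Fintype σ] [DecidableEq σ] [CommRing R] (n : σ →₀ ℕ)
    (f : MvPowerSeries σ R) :
    f - trunc' R n f ∈ Ideal.span (Set.range fun s => X s ^ (n s + 1)) := by
  set J := Ideal.span (Set.range fun s => (X s : MvPowerSeries σ R) ^ (n s + 1))
  have key (T : Finset σ) : ∃ g ∈ J, ∀ m,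
      coeff m (f - g) = if ∀ s ∈ T, m s ≤ n s then coeff m f else 0 := by
    induction T using Finset.induction_on with
    | empty => exact ⟨0, J.zero_mem, by simp⟩
    | insert a T _ ih =>
      obtain ⟨g, hg, hfg⟩ := ih
      obtain ⟨ψ, hψ⟩ := exists_coeff_sub_X_pow_mul (f - g) a (n a + 1)
      refine ⟨g + X a ^ (n a + 1) * ψ,
        J.add_mem hg (J.mul_mem_right _ (Ideal.subset_span ⟨a, rfl⟩)), fun m => ?_⟩
      rw [← sub_sub, hψ, hfg]
      simp only [Finset.forall_mem_insert, Nat.lt_succ_iff]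
      split_ifs <;> tauto
  obtain ⟨g, hg, hfg⟩ := key Finset.univ
  convert hg using 1
  ext m
  have := hfg m
  simp only [Finset.mem_univ, true_imp_iff, map_sub, MvPolynomial.coeff_coe, coeff_trunc',
    Finsupp.le_def] at this ⊢
  split_ifs at this ⊢ <;> linear_combination this

end MvPowerSeries

open MvPowerSeries

noncomputable def exponentXY (a b : ℕ) : Fin 2 →₀ ℕ := Finsupp.single 0 a + Finsupp.single 1 b

@[simp]
theorem exponentXY_inj {a b c d : ℕ} : exponentXY a b = exponentXY c d ↔ a = c ∧ b = d := by
  simp [exponentXY, Finsupp.ext_iff, Fin.forall_fin_two]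

@[simp]
theorem exponentXY_le_exponentXY {a b c d : ℕ} :
    exponentXY a b ≤ exponentXY c d ↔ a ≤ c ∧ b ≤ d := by
  simp [exponentXY, Finsupp.le_def, Fin.forall_fin_two]

@[simp]
theorem exponentXY_sub_exponentXY (a b c d : ℕ) :
    exponentXY a b - exponentXY c d = exponentXY (a - c) (b - d) := by
  ext i
  fin_cases i <;> simp [exponentXY]

theorem MvPowerSeries.X_pow_mul_X_pow_eq_monomial {R : Type*} [Semiring R] (a b : ℕ) :
    (X 0 ^ a * X 1 ^ b : MvPowerSeries (Fin 2) R) = monomial (exponentXY a b) 1 := by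
  rw [X_pow_eq, X_pow_eq, monomial_mul_monomial, one_mul, exponentXY]

theorem mem_idealI_of_mul_eq {f u : MvPowerSeries (Fin 2) ℝ} (a b : MvPowerSeries (Fin 2) ℝ)
    (hu : constantCoeff u ≠ 0)
    (h : a * (5 * psX ^ 4 + 2 * psX * psY ^ 2) + b * (2 * psX ^ 2 * psY + 5 * psY ^ 4) = f * u) :
    f ∈ idealI :=
  (Ideal.mul_unit_mem_iff_mem _ (isUnit_iff_constantCoeff.2 hu.isUnit)).1
    (Ideal.mem_span_pair.2 ⟨a, b, h⟩)

/- Away from the origin, `g₁` and `g₂` vanish only on the curve `25xy = 4` (e.g. at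
`(-2/5, -2/5)`), so the next four monomials are not in the ideal of `ℝ[x,y]` generated by
`g₁, g₂`: they enter `I` only because `4 - 25xy` is a unit of `ℝ[[x,y]]`. -/
theorem X_mul_Y_pow_three_mem_idealI : psX * psY ^ 3 ∈ idealI :=
  mem_idealI_of_mul_eq (u := 4 - 25 * psX * psY) (2 * psY) (-5 * psX ^ 2)
    (by simp [psX, psY, map_ofNat constantCoeff]) (by ring)

theorem X_pow_three_mul_Y_mem_idealI : psX ^ 3 * psY ∈ idealI :=
  mem_idealI_of_mul_eq (u := 4 - 25 * psX * psY) (-5 * psY ^ 2) (2 * psX)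
    (by simp [psX, psY, map_ofNat constantCoeff]) (by ring)

theorem X_pow_six_mem_idealI : psX ^ 6 ∈ idealI :=
  mem_idealI_of_mul_eq (u := 20 - 125 * psX * psY)
    (10 * psY ^ 3 + 4 * psX ^ 2 - 25 * psX ^ 3 * psY) (-4 * psX * psY)
    (by simp [psX, psY, map_ofNat constantCoeff]) (by ring)

theorem Y_pow_six_mem_idealI : psY ^ 6 ∈ idealI :=
  mem_idealI_of_mul_eq (u := 20 - 125 * psX * psY)
    (-4 * psX * psY) (10 * psX ^ 3 + 4 * psY ^ 2 - 25 * psX * psY ^ 3)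
    (by simp [psX, psY, map_ofNat constantCoeff]) (by ring)

theorem X_pow_five_sub_Y_pow_five_mem_idealI : psX ^ 5 - psY ^ 5 ∈ idealI :=
  mem_idealI_of_mul_eq (u := 5) psX (-psY) (by simp [map_ofNat constantCoeff]) (by ring)

theorem coeff_mul_add_mul_generators (p q : MvPowerSeries (Fin 2) ℝ) (a b : ℕ) :
    coeff (exponentXY a b)
        (p * (5 * psX ^ 4 + 2 * psX * psY ^ 2) + q * (2 * psX ^ 2 * psY + 5 * psY ^ 4)) =
      (if 4 ≤ a then 5 * coeff (exponentXY (a - 4) b) p else 0) +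
      (if 1 ≤ a ∧ 2 ≤ b then 2 * coeff (exponentXY (a - 1) (b - 2)) p else 0) +
      (if 2 ≤ a ∧ 1 ≤ b then 2 * coeff (exponentXY (a - 2) (b - 1)) q else 0) +
      (if 4 ≤ b then 5 * coeff (exponentXY a (b - 4)) q else 0) := by
  have : p * (5 * psX ^ 4 + 2 * psX * psY ^ 2) + q * (2 * psX ^ 2 * psY + 5 * psY ^ 4) =
      (5 : ℝ) • (p * monomial (exponentXY 4 0) 1) + (2 : ℝ) • (p * monomial (exponentXY 1 2) 1) +
        (2 : ℝ) • (q * monomial (exponentXY 2 1) 1) +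
        (5 : ℝ) • (q * monomial (exponentXY 0 4) 1) := by
    simp only [← X_pow_mul_X_pow_eq_monomial, psX, psY]
    linear_combination (norm := algebra)
  rw [this]
  simp [coeff_mul_monomial]

namespace MilnorAlgebra

local notation "𝒜" => MvPowerSeries (Fin 2) ℝ ⧸ idealI

noncomputable def π : MvPowerSeries (Fin 2) ℝ →ₐ[ℝ] 𝒜 := Ideal.Quotient.mkₐ ℝ idealI

noncomputable def x : 𝒜 := π psX

noncomputable def y : 𝒜 := π psY

theorem π_X_zero : π (X 0) = x := rfl

theorem π_X_one : π (X 1) = y := rfl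

theorem π_eq_zero {f : MvPowerSeries (Fin 2) ℝ} (hf : f ∈ idealI) : π f = 0 :=
  Ideal.Quotient.eq_zero_iff_mem.2 hf

theorem x_mul_y_sq : x * y ^ 2 = (-5 / 2 : ℝ) • x ^ 4 := by
  have : 5 * x ^ 4 + 2 * x * y ^ 2 = 0 := by
    simpa only [map_add, map_mul, map_pow, map_ofNat, psX, psY, π_X_zero, π_X_one] using
      π_eq_zero (Ideal.subset_span (Set.mem_insert _ _))
  linear_combination (norm := algebra) (1 / 2 : ℝ) • this

theorem x_sq_mul_y : x ^ 2 * y = (-5 / 2 : ℝ) • y ^ 4 := by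
  have : 2 * x ^ 2 * y + 5 * y ^ 4 = 0 := by
    simpa only [map_add, map_mul, map_pow, map_ofNat, psX, psY, π_X_zero, π_X_one] using
      π_eq_zero (Ideal.subset_span (Set.mem_insert_of_mem _ rfl))
  linear_combination (norm := algebra) (1 / 2 : ℝ) • this

theorem x_mul_y_pow_three : x * y ^ 3 = 0 := by
  simpa only [map_mul, map_pow, psX, psY, π_X_zero, π_X_one] using
    π_eq_zero X_mul_Y_pow_three_mem_idealI

theorem x_pow_three_mul_y : x ^ 3 * y = 0 := by
  simpa only [map_mul, map_pow, psX, psY, π_X_zero, π_X_one] using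
    π_eq_zero X_pow_three_mul_Y_mem_idealI

theorem y_pow_six : y ^ 6 = 0 := by
  simpa only [map_pow, psY, π_X_one] using π_eq_zero Y_pow_six_mem_idealI

theorem x_pow_five : x ^ 5 = y ^ 5 :=
  sub_eq_zero.1 <| by
    simpa only [map_sub, map_pow, psX, psY, π_X_zero, π_X_one] using
      π_eq_zero X_pow_five_sub_Y_pow_five_mem_idealI

noncomputable def basisMonomial : Fin 11 → 𝒜 :=
  ![1, x, x ^ 2, x ^ 3, x ^ 4, y, y ^ 2, y ^ 3, y ^ 4, y ^ 5, x * y]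

noncomputable def basisSpan : Submodule ℝ 𝒜 := Submodule.span ℝ (Set.range basisMonomial)

theorem mem_basisSpan_of_eq_smul {z : 𝒜} (w : 𝒜) (hw : w ∈ Set.range basisMonomial) (c : ℝ)
    (h : z = c • w) : z ∈ basisSpan :=
  h ▸ Submodule.smul_mem _ _ (Submodule.subset_span hw)

theorem mem_basisSpan_of_eq_zero {z : 𝒜} (h : z = 0) : z ∈ basisSpan :=
  h ▸ basisSpan.zero_mem

theorem basisMonomial_mul_x_mem (i : Fin 11) : basisMonomial i * x ∈ basisSpan := by
  fin_cases i <;> simp only [basisMonomial, Fin.zero_eta, Fin.mk_one, Fin.reduceFinMk,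
    Fin.isValue, Matrix.cons_val_zero, Matrix.cons_val_one, Matrix.cons_val, one_mul]
  · exact mem_basisSpan_of_eq_smul x ⟨1, rfl⟩ 1 (by linear_combination (norm := algebra))
  · exact mem_basisSpan_of_eq_smul (x ^ 2) ⟨2, rfl⟩ 1 (by linear_combination (norm := algebra))
  · exact mem_basisSpan_of_eq_smul (x ^ 3) ⟨3, rfl⟩ 1 (by linear_combination (norm := algebra))
  · exact mem_basisSpan_of_eq_smul (x ^ 4) ⟨4, rfl⟩ 1 (by linear_combination (norm := algebra))
  · exact mem_basisSpan_of_eq_smul (y ^ 5) ⟨9, rfl⟩ 1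
      (by linear_combination (norm := algebra) x_pow_five)
  · exact mem_basisSpan_of_eq_smul (x * y) ⟨10, rfl⟩ 1 (by linear_combination (norm := algebra))
  · exact mem_basisSpan_of_eq_smul (x ^ 4) ⟨4, rfl⟩ (-5 / 2)
      (by linear_combination (norm := algebra) x_mul_y_sq)
  · exact mem_basisSpan_of_eq_zero (by linear_combination x_mul_y_pow_three)
  · exact mem_basisSpan_of_eq_zero (by linear_combination y * x_mul_y_pow_three)
  · exact mem_basisSpan_of_eq_zero (by linear_combination y ^ 2 * x_mul_y_pow_three)
  · exact mem_basisSpan_of_eq_smul (y ^ 4) ⟨8, rfl⟩ (-5 / 2)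
      (by linear_combination (norm := algebra) x_sq_mul_y)

theorem basisMonomial_mul_y_mem (i : Fin 11) : basisMonomial i * y ∈ basisSpan := by
  fin_cases i <;> simp only [basisMonomial, Fin.zero_eta, Fin.mk_one, Fin.reduceFinMk,
    Fin.isValue, Matrix.cons_val_zero, Matrix.cons_val_one, Matrix.cons_val, one_mul]
  · exact mem_basisSpan_of_eq_smul y ⟨5, rfl⟩ 1 (by linear_combination (norm := algebra))
  · exact mem_basisSpan_of_eq_smul (x * y) ⟨10, rfl⟩ 1 (by linear_combination (norm := algebra))
  · exact mem_basisSpan_of_eq_smul (y ^ 4) ⟨8, rfl⟩ (-5 / 2)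
      (by linear_combination (norm := algebra) x_sq_mul_y)
  · exact mem_basisSpan_of_eq_zero (by linear_combination x_pow_three_mul_y)
  · exact mem_basisSpan_of_eq_zero (by linear_combination x * x_pow_three_mul_y)
  · exact mem_basisSpan_of_eq_smul (y ^ 2) ⟨6, rfl⟩ 1 (by linear_combination (norm := algebra))
  · exact mem_basisSpan_of_eq_smul (y ^ 3) ⟨7, rfl⟩ 1 (by linear_combination (norm := algebra))
  · exact mem_basisSpan_of_eq_smul (y ^ 4) ⟨8, rfl⟩ 1 (by linear_combination (norm := algebra))
  · exact mem_basisSpan_of_eq_smul (y ^ 5) ⟨9, rfl⟩ 1 (by linear_combination (norm := algebra))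
  · exact mem_basisSpan_of_eq_zero (by linear_combination y_pow_six)
  · exact mem_basisSpan_of_eq_smul (x ^ 4) ⟨4, rfl⟩ (-5 / 2)
      (by linear_combination (norm := algebra) x_mul_y_sq)

theorem mul_mem_basisSpan {z : 𝒜} (hz : ∀ i, basisMonomial i * z ∈ basisSpan) {w : 𝒜}
    (hw : w ∈ basisSpan) : w * z ∈ basisSpan := by
  have : basisSpan ≤ basisSpan.comap (LinearMap.mulRight ℝ z) :=
    Submodule.span_le.2 (Set.range_subset_iff.2 hz)
  exact this hw

theorem π_coe_mem_basisSpan (p : MvPolynomial (Fin 2) ℝ) : π p ∈ basisSpan := by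
  induction p using MvPolynomial.induction_on with
  | C a =>
    rw [MvPolynomial.coe_C, ← mul_one (C a), ← smul_eq_C_mul, map_smul, map_one]
    exact mem_basisSpan_of_eq_smul 1 ⟨0, rfl⟩ a rfl
  | add p q hp hq =>
    rw [MvPolynomial.coe_add, map_add]
    exact add_mem hp hq
  | mul_X p s hp =>
    rw [MvPolynomial.coe_mul, MvPolynomial.coe_X, map_mul]
    fin_cases s
    · exact mul_mem_basisSpan basisMonomial_mul_x_mem hp
    · exact mul_mem_basisSpan basisMonomial_mul_y_mem hp

theorem π_eq_π_trunc' (f : MvPowerSeries (Fin 2) ℝ) :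
    π f = π (trunc' ℝ (Finsupp.single 0 5 + Finsupp.single 1 5) f) := by
  refine Ideal.Quotient.eq.2 (Ideal.span_le.2 ?_ (sub_trunc'_mem_span_X_pow _ f))
  rintro _ ⟨s, rfl⟩
  fin_cases s
  · simpa [psX] using X_pow_six_mem_idealI
  · simpa [psY] using Y_pow_six_mem_idealI

theorem basisSpan_eq_top : basisSpan = ⊤ := by
  refine Submodule.eq_top_iff'.2 fun z => ?_
  obtain ⟨f, rfl⟩ := Ideal.Quotient.mkₐ_surjective ℝ idealI z
  rw [← π, π_eq_π_trunc']
  exact π_coe_mem_basisSpan _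

noncomputable def basisExponent : Fin 11 → Fin 2 →₀ ℕ :=
  ![exponentXY 0 0, exponentXY 1 0, exponentXY 2 0, exponentXY 3 0, exponentXY 4 0,
    exponentXY 0 1, exponentXY 0 2, exponentXY 0 3, exponentXY 0 4, exponentXY 0 5,
    exponentXY 1 1]

theorem π_monomial_basisExponent (i : Fin 11) :
    π (monomial (basisExponent i) 1) = basisMonomial i := by
  fin_cases i <;>
    simp [basisExponent, basisMonomial, ← X_pow_mul_X_pow_eq_monomial, π_X_zero, π_X_one]

theorem linearIndependent_basisMonomial : LinearIndependent ℝ basisMonomial := by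
  rw [Fintype.linearIndependent_iff]
  intro c hc
  have hπ : π (∑ i, c i • monomial (basisExponent i) 1) = 0 := by
    simpa only [map_sum, map_smul, π_monomial_basisExponent] using hc
  obtain ⟨p, q, hpq⟩ := Ideal.mem_span_pair.1 (Ideal.Quotient.eq_zero_iff_mem.1 hπ)
  have h (a b : ℕ) := congrArg (coeff (exponentXY a b)) hpq
  simp only [coeff_mul_add_mul_generators] at h
  -- In degrees `≤ 5`, `p g₁ + q g₂` only involves the constant and linear coefficients of `p`, `q`.
  have h00 := h 0 0
  have h10 := h 1 0
  have h01 := h 0 1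
  have h20 := h 2 0
  have h11 := h 1 1
  have h02 := h 0 2
  have h30 := h 3 0
  have h03 := h 0 3
  have h12 := h 1 2
  have h21 := h 2 1
  have h40 := h 4 0
  have h04 := h 0 4
  have h50 := h 5 0
  have h22 := h 2 2
  have h05 := h 0 5
  simp [Fin.sum_univ_succ, basisExponent,
    coeff_monomial] at h00 h10 h01 h20 h11 h02 h30 h03 h12 h21 h40 h04 h50 h22 h05
  intro i
  fin_cases i <;> simp only [Fin.zero_eta, Fin.mk_one, Fin.reduceFinMk, Fin.isValue] <;> linarith

end MilnorAlgebra

theorem stmt_11 :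
    Module.finrank ℝ (MvPowerSeries (Fin 2) ℝ ⧸ idealI) = 11 := by
  rw [Module.finrank_eq_card_basis (Module.Basis.mk MilnorAlgebra.linearIndependent_basisMonomial
    MilnorAlgebra.basisSpan_eq_top.ge), Fintype.card_fin]
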